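/- Let λ ≥ 0 and let X be a spike prior. Let Q_n = GWig_n(λ, X) and P_n = GWig_n(0). Then the second moment satisfies the identity ∫ (dQ_n/dP_n)² dP_n = E_{x,x'} exp((nλ²/2)⟨x,x'⟩²), where x and x' are drawn independently from X_n (the identity holds as an equality in [0,∞]). -/

import Mathlib

open MeasureTheory ProbabilityTheory Filter Topology ENNReal

noncomputable section

/-- Contiguity of a sequence of measures: `Q ◁ P`. -/
def Contiguous {Ω : ℕ → Type} [∀ n, MeasurableSpace (Ω n)]
    (Q P : ∀ n, Measure (Ω n)) : Prop :=
  ∀ A : ∀ n, Set (Ω n), (∀ n, MeasurableSet (A n)) →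
    Tendsto (fun n => P n (A n)) atTop (𝓝 0) →
    Tendsto (fun n => Q n (A n)) atTop (𝓝 0)

/-- A spike prior: a family of probability measures on ℝⁿ with ‖x‖ → 1 in probability. -/
structure SpikePrior where
  μ : ∀ n : ℕ, Measure (EuclideanSpace ℝ (Fin n))
  isProb : ∀ n, IsProbabilityMeasure (μ n)
  norm_tendsto_one : ∀ ε : ℝ, 0 < ε →
    Tendsto (fun n => μ n {x | ε < |‖x‖ - 1|}) atTop (𝓝 0)

/-- The second moment `E_{x,x'} exp((n λ²/2) ⟨x,x'⟩²)` (valued in `[0,∞]`). -/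
def wignerSecondMoment (μ : ∀ n : ℕ, Measure (EuclideanSpace ℝ (Fin n)))
    (lam : ℝ) (n : ℕ) : ℝ≥0∞ :=
  ∫⁻ p, ENNReal.ofReal (Real.exp ((n * lam ^ 2 / 2) * (inner ℝ p.1 p.2 : ℝ) ^ 2))
    ∂((μ n).prod (μ n))

/-- Wigner noise matrix: symmetric, entries independent up to symmetry, off-diagonal `P`,
diagonal `Pd`. -/
def wignerNoise (P Pd : Measure ℝ) (n : ℕ) : Measure (Fin n → Fin n → ℝ) :=
  (Measure.pi fun p : Fin n × Fin n => if p.1 = p.2 then Pd else P).map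
    (fun g i j => if i ≤ j then g (i, j) else g (j, i))

/-- The general spiked Wigner model `Wig(λ, P, Pd, μ)`: law of `λ x xᵀ + n^{-1/2} W`. -/
def spikedWigner (lam : ℝ) (P Pd : Measure ℝ) {n : ℕ}
    (μ : Measure (EuclideanSpace ℝ (Fin n))) : Measure (Fin n → Fin n → ℝ) :=
  (μ.prod (wignerNoise P Pd n)).map
    (fun q i j => lam * (q.1 i * q.1 j) + (Real.sqrt n)⁻¹ * q.2 i j)

/-- The unspiked Wigner model `Wig(0, P, Pd)`: law of `n^{-1/2} W`. -/
def unspikedWigner (P Pd : Measure ℝ) (n : ℕ) : Measure (Fin n → Fin n → ℝ) :=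
  (wignerNoise P Pd n).map (fun W i j => (Real.sqrt n)⁻¹ * W i j)

/-- Spiked Gaussian Wigner model `GWig(λ, μ)` (GOE noise). -/
def GWig (lam : ℝ) {n : ℕ} (μ : Measure (EuclideanSpace ℝ (Fin n))) :
    Measure (Fin n → Fin n → ℝ) :=
  spikedWigner lam (gaussianReal 0 1) (gaussianReal 0 2) μ

/-- Unspiked Gaussian Wigner model `GWig(0)`. -/
def GWig0 (n : ℕ) : Measure (Fin n → Fin n → ℝ) :=
  unspikedWigner (gaussianReal 0 1) (gaussianReal 0 2) n

/-- A real random variable `Z` on `(Ω, μ)` is `s2`-subgaussian. -/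
def IsSubgaussian {Ω : Type} [MeasurableSpace Ω] (μ : Measure Ω) (Z : Ω → ℝ) (s2 : ℝ) : Prop :=
  Integrable Z μ ∧ (∫ ω, Z ω ∂μ) = 0 ∧
    ∀ v : ℝ, ∫⁻ ω, ENNReal.ofReal (Real.exp (v * Z ω)) ∂μ
      ≤ ENNReal.ofReal (Real.exp (s2 * v ^ 2 / 2))

/-- An ℝⁿ-valued random variable (given by its law `μ`) is `s2`-subgaussian. -/
def IsSubgaussianVec {n : ℕ} (μ : Measure (EuclideanSpace ℝ (Fin n))) (s2 : ℝ) : Prop :=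
  Integrable id μ ∧ (∫ x, x ∂μ) = 0 ∧
    ∀ v : EuclideanSpace ℝ (Fin n),
      ∫⁻ x, ENNReal.ofReal (Real.exp ((inner ℝ v x : ℝ))) ∂μ
        ≤ ENNReal.ofReal (Real.exp (s2 * ‖v‖ ^ 2 / 2))

/-- `λ*_X`: the supremum of λ ≥ 0 for which the Wigner second moment stays bounded. -/
def lamStar (μ : ∀ n : ℕ, Measure (EuclideanSpace ℝ (Fin n))) : ℝ :=
  sSup {lam : ℝ | 0 ≤ lam ∧
    ∃ B : ℝ≥0∞, B ≠ ⊤ ∧ ∀ n, wignerSecondMoment μ lam n ≤ B}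

/-- Standard Gaussian on `EuclideanSpace ℝ (Fin n)`. -/
def stdGaussianE (n : ℕ) : Measure (EuclideanSpace ℝ (Fin n)) :=
  (Measure.pi fun _ : Fin n => gaussianReal 0 1).map
    (fun y => (WithLp.equiv 2 (Fin n → ℝ)).symm y)

/-- The square root of a positive semidefinite matrix, as `Matrix.PosSemidef.sqrt` was defined
in Mathlib (Dec 2024). -/
def Matrix.PosSemidef.sqrt {n : Type*} [Fintype n] [DecidableEq n]
    {A : Matrix n n ℝ} (hA : A.PosSemidef) : Matrix n n ℝ :=
  (hA.1.eigenvectorUnitary : Matrix n n ℝ) *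
    Matrix.diagonal ((fun x : ℝ => Real.sqrt x) ∘ hA.1.eigenvalues) *
    (star hA.1.eigenvectorUnitary : Matrix n n ℝ)

open scoped Classical in
/-- Centered multivariate Gaussian `N(0, S)` (zero measure when `S` is not psd). -/
def gaussianCov {n : ℕ} (S : Matrix (Fin n) (Fin n) ℝ) : Measure (EuclideanSpace ℝ (Fin n)) :=
  if h : S.PosSemidef then
    (stdGaussianE n).map
      (fun w => (WithLp.equiv 2 (Fin n → ℝ)).symm (h.sqrt.mulVec (fun i => w i)))
  else 0

/-- The spiked Wishart model: the joint law of `N` i.i.d. samples from `N(0, I + β x xᵀ)`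
with `x ~ μ`. -/
def wishartSpiked (β : ℝ) {n : ℕ} (μ : Measure (EuclideanSpace ℝ (Fin n))) (N : ℕ) :
    Measure (Fin N → EuclideanSpace ℝ (Fin n)) :=
  μ.bind (fun x => Measure.pi fun _ : Fin N =>
    gaussianCov (1 + β • Matrix.vecMulVec (fun i => x i) (fun i => x i)))

/-- The unspiked Wishart model: `N` i.i.d. samples from `N(0, I)`. -/
def wishartNull (n N : ℕ) : Measure (Fin N → EuclideanSpace ℝ (Fin n)) :=
  Measure.pi fun _ : Fin N => stdGaussianE n

/-- The i.i.d. spike prior `iid(π/√n)`. -/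
def iidPrior (π : Measure ℝ) (n : ℕ) : Measure (EuclideanSpace ℝ (Fin n)) :=
  (Measure.pi fun _ : Fin n => π).map
    (fun y => (WithLp.equiv 2 (Fin n → ℝ)).symm (fun i => y i / Real.sqrt n))

/-- `f` is a rate function for the prior `μ`. -/
def IsRateFunction (μ : ∀ n : ℕ, Measure (EuclideanSpace ℝ (Fin n))) (f : ℝ → ℝ) : Prop :=
  (∀ t ∈ Set.Ico (0:ℝ) 1, 0 ≤ f t) ∧
  ∃ b : ℕ → ℝ → ℝ,
    (∀ n : ℕ, ∀ t ∈ Set.Ico (0:ℝ) 1,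
      b n t ≤ -(1 / (n:ℝ)) *
        Real.log ((((μ n).prod (μ n)) {p | t ≤ |(inner ℝ p.1 p.2 : ℝ)|}).toReal)) ∧
    TendstoUniformlyOn b f atTop (Set.Ico 0 1)

/-- The rate function `f` admits a local Chernoff bound for the prior `μ`. -/
def HasLocalChernoff (μ : ∀ n : ℕ, Measure (EuclideanSpace ℝ (Fin n))) (f : ℝ → ℝ) : Prop :=
  ∃ T : ℝ, 0 < T ∧ ∃ C : ℝ, 0 < C ∧ ∀ n : ℕ, ∀ t ∈ Set.Icc (0:ℝ) T,
    ((μ n).prod (μ n)) {p | t ≤ |(inner ℝ p.1 p.2 : ℝ)|}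
      ≤ ENNReal.ofReal (C * Real.exp (-(n:ℝ) * f t))

/-- The function `F(β,t)` appearing in the Wishart lower bound (Theorem 5.9). -/
def wishartF (β t : ℝ) : ℝ :=
  (1 + β) * (t * ((Real.sqrt (((1 - t ^ 2) / (2 * t * (β + 1))) ^ 2 + 1)
      - (1 - t ^ 2) / (2 * t * (β + 1))) - t) / (1 - t ^ 2))
    + (1 / 2) * Real.log ((1 - (Real.sqrt (((1 - t ^ 2) / (2 * t * (β + 1))) ^ 2 + 1)
      - (1 - t ^ 2) / (2 * t * (β + 1))) ^ 2) / (1 - t ^ 2))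


open scoped NNReal

/-!
In the coordinates `(Y i j)_{i ≤ j}` the null model is a centred Gaussian vector with independent
entries of variances `2/n` (diagonal) and `1/n` (off-diagonal), and the spiked model is the same
vector shifted by `m(x) = (λ x_i x_j)_{i ≤ j}` with `x ~ X_n`; symmetrisation is measurably
invertible, so the second moment can be computed in these coordinates. A mean shift by `m` has
likelihood ratio `L_m(y) = ∏ exp(m_u y_u / v_u - m_u² / (2 v_u))`, so `dQ/dP = E_x L_{m(x)}`,
and by Tonelli and the Gaussian moment generating function
`∫ (dQ/dP)² dP = E_{x,x'} ∫ L_{m(x)} L_{m(x')} dP = E_{x,x'} exp (∑_u m_u(x) m_u(x') / v_u)`.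
Counting each off-diagonal pair twice, the exponent is `(nλ²/2) ⟨x, x'⟩²`.
-/

namespace MeasureTheory

section Pi

variable {ι : Type*} [Fintype ι] {X : ι → Type*} [∀ i, MeasurableSpace (X i)]
  {μ : ∀ i, Measure (X i)} [∀ i, IsProbabilityMeasure (μ i)]

theorem lintegral_pi_prod {f : ∀ i, X i → ℝ≥0∞} (hf : ∀ i, Measurable (f i)) :
    ∫⁻ x, ∏ i, f i (x i) ∂Measure.pi μ = ∏ i, ∫⁻ y, f i y ∂μ i := by
  rw [lintegral_prod_eq_prod_lintegral_of_indepFun _ _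
    (iIndepFun_pi fun i => (hf i).aemeasurable) fun i => (hf i).comp (measurable_pi_apply i)]
  exact Finset.prod_congr rfl fun i _ => (measurePreserving_eval μ i).lintegral_comp (hf i)

theorem pi_withDensity {g : ∀ i, X i → ℝ≥0∞} (hg : ∀ i, Measurable (g i))
    [∀ i, SigmaFinite ((μ i).withDensity (g i))] :
    Measure.pi (fun i => (μ i).withDensity (g i))
      = (Measure.pi μ).withDensity (fun x => ∏ i, g i (x i)) := by
  refine Measure.pi_eq fun s hs => ?_
  have hind : (Set.univ.pi s).indicator (fun x => ∏ i, g i (x i))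
      = fun x => ∏ i, (s i).indicator (g i) (x i) := by
    ext x
    by_cases hx : x ∈ Set.univ.pi s
    · simp_all [Set.indicator_of_mem]
    · obtain ⟨i, hi⟩ : ∃ i, x i ∉ s i := by simpa [Set.mem_pi] using hx
      rw [Set.indicator_of_notMem hx, Finset.prod_eq_zero (Finset.mem_univ i)
        (Set.indicator_of_notMem hi _)]
  rw [withDensity_apply _ (.univ_pi hs), ← lintegral_indicator (.univ_pi hs), hind,
    lintegral_pi_prod fun i => (hg i).indicator (hs i)]
  exact Finset.prod_congr rfl fun i _ => by
    rw [lintegral_indicator (hs i), withDensity_apply _ (hs i)]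

end Pi

theorem Measure.pi_map_restrict_subtype {ι : Type*} [Fintype ι] {α : ι → Type*}
    [∀ i, MeasurableSpace (α i)] (μ : ∀ i, Measure (α i))
    [∀ i, IsProbabilityMeasure (μ i)] (p : ι → Prop) [DecidablePred p] :
    (Measure.pi μ).map (fun x (i : Subtype p) => x i) = Measure.pi fun i : Subtype p => μ i := by
  rw [show (fun x (i : Subtype p) => x i)
      = Prod.fst ∘ MeasurableEquiv.piEquivPiSubtypeProd α p from rfl,
    ← Measure.map_map measurable_fst (MeasurableEquiv.measurable _),
    (measurePreserving_piEquivPiSubtypeProd μ p).map_eq, Measure.map_fst_prod, measure_univ,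
    one_smul]

theorem Measure.prod_map_right {α β γ : Type*} [MeasurableSpace α] [MeasurableSpace β]
    [MeasurableSpace γ] (μ : Measure α) (ν : Measure β) [SFinite μ] [SFinite ν]
    {g : β → γ} (hg : Measurable g) :
    μ.prod (ν.map g) = (μ.prod ν).map (Prod.map id g) := by
  simpa using Measure.map_prod_map μ ν measurable_id hg

theorem withDensity_map_of_leftInverse {α β : Type*} [MeasurableSpace α] [MeasurableSpace β]
    (μ : Measure α) {f : α → β} {g : β → α} (hf : Measurable f) (hg : Measurable g)
    (hgf : Function.LeftInverse g f) {d : α → ℝ≥0∞} (hd : Measurable d) :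
    (μ.withDensity d).map f = (μ.map f).withDensity (d ∘ g) := by
  ext A hA
  rw [Measure.map_apply hf hA, withDensity_apply _ (hf hA), withDensity_apply _ hA,
    Measure.restrict_map hf hA, lintegral_map (hd.comp hg) hf]
  simp [hgf _]

theorem lintegral_rnDeriv_map_of_leftInverse {α β : Type*} [MeasurableSpace α]
    [MeasurableSpace β] (μ : Measure α) [IsFiniteMeasure μ] {f : α → β} {g : β → α}
    (hf : Measurable f) (hg : Measurable g) (hgf : Function.LeftInverse g f) {d : α → ℝ≥0∞}
    (hd : Measurable d) {Φ : ℝ≥0∞ → ℝ≥0∞} (hΦ : Measurable Φ) :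
    ∫⁻ y, Φ (((μ.withDensity d).map f).rnDeriv (μ.map f) y) ∂(μ.map f)
      = ∫⁻ x, Φ (d x) ∂μ := by
  rw [withDensity_map_of_leftInverse μ hf hg hgf hd]
  calc _ = ∫⁻ y, Φ ((d ∘ g) y) ∂(μ.map f) :=
        lintegral_congr_ae ((Measure.rnDeriv_withDensity _ (hd.comp hg)).fun_comp Φ)
    _ = ∫⁻ x, Φ (d x) ∂μ := by
        rw [lintegral_map (f := fun y => Φ ((d ∘ g) y)) (hΦ.comp (hd.comp hg)) hf]
        simp [hgf _]

end MeasureTheory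

def gaussianLR (m : ℝ) (v : ℝ≥0) (y : ℝ) : ℝ≥0∞ :=
  ENNReal.ofReal (Real.exp (m * y / v - m ^ 2 / (2 * v)))

@[fun_prop]
theorem Measurable.gaussianLR {α : Type*} [MeasurableSpace α] {m y : α → ℝ}
    (hm : Measurable m) (hy : Measurable y) (v : ℝ≥0) :
    Measurable fun a => gaussianLR (m a) v (y a) := by
  unfold _root_.gaussianLR
  fun_prop

theorem gaussianReal_map_const_add_eq_withDensity {v : ℝ≥0} (hv : v ≠ 0) (m : ℝ) :
    (gaussianReal 0 v).map (m + ·) = (gaussianReal 0 v).withDensity (gaussianLR m v) := by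
  have hv' : (v : ℝ) ≠ 0 := mod_cast hv
  rw [gaussianReal_map_const_add, zero_add, gaussianReal_of_var_ne_zero m hv,
    gaussianReal_of_var_ne_zero 0 hv,
    ← withDensity_mul _ (measurable_gaussianPDF 0 v)
      (by fun_prop : Measurable (gaussianLR m v))]
  congr 1
  ext y
  simp only [Pi.mul_apply, gaussianPDF, gaussianLR, gaussianPDFReal]
  rw [← ENNReal.ofReal_mul (by positivity)]
  congr 1
  rw [mul_assoc _ (Real.exp _), ← Real.exp_add]
  congr 2
  field_simp
  ring

theorem lintegral_exp_mul_gaussianReal (μ : ℝ) (v : ℝ≥0) (a : ℝ) :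
    ∫⁻ y, ENNReal.ofReal (Real.exp (a * y)) ∂gaussianReal μ v
      = ENNReal.ofReal (Real.exp (μ * a + v * a ^ 2 / 2)) := by
  rw [← ofReal_integral_eq_lintegral_ofReal (integrable_exp_mul_gaussianReal a)
    (ae_of_all _ fun _ => (Real.exp_pos _).le)]
  exact congrArg ENNReal.ofReal (congrFun mgf_id_gaussianReal a)

theorem lintegral_gaussianLR_mul (v : ℝ≥0) (m m' : ℝ) :
    ∫⁻ y, gaussianLR m v y * gaussianLR m' v y ∂gaussianReal 0 v
      = ENNReal.ofReal (Real.exp (m * m' / v)) := by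
  have hsplit : ∀ y, gaussianLR m v y * gaussianLR m' v y
      = ENNReal.ofReal (Real.exp ((m + m') / v * y))
        * ENNReal.ofReal (Real.exp (-(m ^ 2 + m' ^ 2) / (2 * v))) := by
    intro y
    simp only [gaussianLR]
    rw [← ENNReal.ofReal_mul (by positivity), ← ENNReal.ofReal_mul (by positivity),
      ← Real.exp_add, ← Real.exp_add]
    congr 2
    ring
  simp_rw [hsplit]
  rw [lintegral_mul_const _ (by fun_prop), lintegral_exp_mul_gaussianReal,
    ← ENNReal.ofReal_mul (by positivity), ← Real.exp_add]
  congr 2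
  rcases eq_or_ne (v : ℝ) 0 with hv | hv
  · simp [hv]
  · field_simp
    ring

section GaussianProduct

variable {ι : Type*} [Fintype ι] (v : ι → ℝ≥0)

def gaussianPi : Measure (ι → ℝ) := Measure.pi fun i => gaussianReal 0 (v i)

instance : IsProbabilityMeasure (gaussianPi v) := by unfold gaussianPi; infer_instance

def gaussianPiLR (m h : ι → ℝ) : ℝ≥0∞ := ∏ i, gaussianLR (m i) (v i) (h i)

@[fun_prop]
theorem Measurable.gaussianPiLR {α : Type*} [MeasurableSpace α] {m h : α → ι → ℝ}
    (hm : Measurable m) (hh : Measurable h) : Measurable fun a => gaussianPiLR v (m a) (h a) := by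
  unfold _root_.gaussianPiLR
  fun_prop

variable {v}

theorem gaussianPi_map_const_add_eq_withDensity (hv : ∀ i, v i ≠ 0) (m : ι → ℝ) :
    (gaussianPi v).map (m + ·) = (gaussianPi v).withDensity (gaussianPiLR v m) := by
  have hshift i := gaussianReal_map_const_add_eq_withDensity (hv i) (m i)
  have (i : ι) :
      IsProbabilityMeasure ((gaussianReal 0 (v i)).withDensity (gaussianLR (m i) (v i))) := by
    rw [← hshift i]
    exact Measure.isProbabilityMeasure_map (by fun_prop)
  rw [gaussianPi, show (m + ·) = fun (h : ι → ℝ) i => m i + h i from rfl,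
    Measure.pi_map_pi fun i => by fun_prop]
  simp_rw [hshift]
  exact pi_withDensity fun i => by fun_prop

theorem lintegral_gaussianPiLR_mul (m m' : ι → ℝ) :
    ∫⁻ h, gaussianPiLR v m h * gaussianPiLR v m' h ∂gaussianPi v
      = ENNReal.ofReal (Real.exp (∑ i, m i * m' i / v i)) := by
  simp_rw [gaussianPiLR, ← Finset.prod_mul_distrib]
  rw [gaussianPi, lintegral_pi_prod
    (f := fun i y => gaussianLR (m i) (v i) y * gaussianLR (m' i) (v i) y) fun i => by fun_prop]
  simp_rw [lintegral_gaussianLR_mul]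
  rw [← ENNReal.ofReal_prod_of_nonneg fun i _ => (Real.exp_pos _).le, Real.exp_sum]

variable {X : Type*} [MeasurableSpace X] (μ : Measure X) [SFinite μ] {m : X → ι → ℝ}

theorem map_const_add_prod_gaussianPi (hv : ∀ i, v i ≠ 0) (hm : Measurable m) :
    (μ.prod (gaussianPi v)).map (fun q => m q.1 + q.2)
      = (gaussianPi v).withDensity (fun h => ∫⁻ x, gaussianPiLR v (m x) h ∂μ) := by
  ext A hA
  have hmap : Measurable fun q : X × (ι → ℝ) => m q.1 + q.2 := by fun_prop
  rw [Measure.map_apply hmap hA, Measure.prod_apply (hmap hA), withDensity_apply _ hA,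
    ← lintegral_lintegral_swap (by fun_prop)]
  refine lintegral_congr fun x => ?_
  rw [← withDensity_apply _ hA, ← gaussianPi_map_const_add_eq_withDensity hv,
    Measure.map_apply (by fun_prop) hA]
  rfl

theorem lintegral_sq_lintegral_gaussianPiLR (hm : Measurable m) :
    ∫⁻ h, (∫⁻ x, gaussianPiLR v (m x) h ∂μ) ^ 2 ∂gaussianPi v
      = ∫⁻ p, ENNReal.ofReal (Real.exp (∑ i, m p.1 i * m p.2 i / v i)) ∂μ.prod μ := by
  calc ∫⁻ h, (∫⁻ x, gaussianPiLR v (m x) h ∂μ) ^ 2 ∂gaussianPi v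
      = ∫⁻ h, ∫⁻ p, gaussianPiLR v (m p.1) h * gaussianPiLR v (m p.2) h ∂μ.prod μ
          ∂gaussianPi v := by
        exact lintegral_congr fun h =>
          (sq _).trans (lintegral_prod_mul (by fun_prop) (by fun_prop)).symm
    _ = ∫⁻ p, ∫⁻ h, gaussianPiLR v (m p.1) h * gaussianPiLR v (m p.2) h ∂gaussianPi v
          ∂μ.prod μ :=
        lintegral_lintegral_swap (by fun_prop)
    _ = _ := by simp_rw [lintegral_gaussianPiLR_mul]

end GaussianProduct

theorem sum_eq_sum_upper_of_symm {ι R : Type*} [Fintype ι] [LinearOrder ι]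
    [NonAssocSemiring R] {f : ι × ι → R} (hf : ∀ i j, f (i, j) = f (j, i)) :
    ∑ p, f p
      = ∑ u : {p : ι × ι // p.1 ≤ p.2}, (if u.1.1 = u.1.2 then 1 else 2) * f u.1 := by
  have hswap : ∑ p : ι × ι, (if p.2 < p.1 then f p else 0)
      = ∑ p : ι × ι, (if p.1 < p.2 then f p else 0) :=
    Fintype.sum_equiv (Equiv.prodComm ι ι) _ _ fun ⟨i, j⟩ => by rw [hf i j]; rfl
  calc ∑ p, f p
      = ∑ p : ι × ι, ((if p.1 ≤ p.2 then f p else 0) + (if p.2 < p.1 then f p else 0)) := by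
        refine Fintype.sum_congr _ _ fun p => ?_
        rcases le_or_gt p.1 p.2 with h | h
        · simp [h, h.not_gt]
        · simp [h, h.not_ge]
    _ = ∑ p : ι × ι, (if p.1 ≤ p.2 then (if p.1 = p.2 then 1 else 2) * f p else 0) := by
        rw [Finset.sum_add_distrib, hswap, ← Finset.sum_add_distrib]
        refine Fintype.sum_congr _ _ fun p => ?_
        rcases lt_trichotomy p.1 p.2 with h | h | h
        · simp [h.le, h, h.ne, two_mul]
        · simp [h]
        · simp [h.not_ge, h.not_gt]
    _ = _ := by
        rw [← Finset.sum_filter]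
        exact Finset.sum_subtype _ (by simp) _

section WignerCoordinates

variable {n : ℕ}

abbrev UpperIdx (n : ℕ) := {p : Fin n × Fin n // p.1 ≤ p.2}

def upperIdx (i j : Fin n) : UpperIdx n :=
  if h : i ≤ j then ⟨(i, j), h⟩ else ⟨(j, i), le_of_not_ge h⟩

theorem upperIdx_val (u : UpperIdx n) : upperIdx u.1.1 u.1.2 = u := by
  simp [upperIdx, u.2]

def symmOfUpper {α : Type*} (h : UpperIdx n → α) (i j : Fin n) : α := h (upperIdx i j)

def upperOfMatrix {α : Type*} (Y : Fin n → Fin n → α) (u : UpperIdx n) : α := Y u.1.1 u.1.2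

theorem upperOfMatrix_symmOfUpper {α : Type*} :
    Function.LeftInverse (upperOfMatrix (n := n) (α := α)) symmOfUpper := fun h => by
  ext u
  simp [upperOfMatrix, symmOfUpper, upperIdx_val]

theorem measurable_symmOfUpper {α : Type*} [MeasurableSpace α] :
    Measurable (symmOfUpper (n := n) (α := α)) := by
  unfold symmOfUpper; fun_prop

theorem measurable_upperOfMatrix {α : Type*} [MeasurableSpace α] :
    Measurable (upperOfMatrix (n := n) (α := α)) := by
  unfold upperOfMatrix; fun_prop

end WignerCoordinates

section WignerModels

variable {n : ℕ}

def upperEntryLaw (P Pd : Measure ℝ) (n : ℕ) (u : UpperIdx n) : Measure ℝ :=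
  (if u.1.1 = u.1.2 then Pd else P).map ((Real.sqrt n)⁻¹ * ·)

def spikeUpper (lam : ℝ) (x : EuclideanSpace ℝ (Fin n)) (u : UpperIdx n) : ℝ :=
  lam * (x u.1.1 * x u.1.2)

theorem measurable_spikeUpper (lam : ℝ) : Measurable (spikeUpper (n := n) lam) := by
  unfold spikeUpper; fun_prop

variable (P Pd : Measure ℝ) [IsProbabilityMeasure P] [IsProbabilityMeasure Pd]

instance (u : UpperIdx n) : IsProbabilityMeasure (upperEntryLaw P Pd n u) := by
  unfold upperEntryLaw
  split <;> exact Measure.isProbabilityMeasure_map (by fun_prop)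

theorem pi_map_const_mul_eq_pi_upperEntryLaw :
    (Measure.pi fun u : UpperIdx n => if u.1.1 = u.1.2 then Pd else P).map
        (fun h u => (Real.sqrt n)⁻¹ * h u)
      = Measure.pi (upperEntryLaw P Pd n) := by
  have (u : UpperIdx n) :
      SigmaFinite ((if u.1.1 = u.1.2 then Pd else P).map ((Real.sqrt n)⁻¹ * ·)) :=
    inferInstanceAs (SigmaFinite (upperEntryLaw P Pd n u))
  exact Measure.pi_map_pi fun u => by fun_prop

theorem wignerNoise_eq_map : wignerNoise P Pd n
    = (Measure.pi fun u : UpperIdx n => if u.1.1 = u.1.2 then Pd else P).map symmOfUpper := by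
  have : ∀ p : Fin n × Fin n, IsProbabilityMeasure (if p.1 = p.2 then Pd else P) := fun p => by
    split <;> infer_instance
  have hsymm : (fun (g : Fin n × Fin n → ℝ) i j => if i ≤ j then g (i, j) else g (j, i))
      = symmOfUpper ∘ fun g (u : UpperIdx n) => g u.1 := by
    ext g i j
    simp only [Function.comp, symmOfUpper, upperIdx]
    split_ifs <;> rfl
  rw [wignerNoise, hsymm, ← Measure.map_map measurable_symmOfUpper (by fun_prop),
    Measure.pi_map_restrict_subtype]

theorem unspikedWigner_eq_map :
    unspikedWigner P Pd n = (Measure.pi (upperEntryLaw P Pd n)).map symmOfUpper := by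
  have hscale :
      (fun (W : Fin n → Fin n → ℝ) i j => (Real.sqrt n)⁻¹ * W i j) ∘ symmOfUpper
      = symmOfUpper ∘ fun h (u : UpperIdx n) => (Real.sqrt n)⁻¹ * h u := rfl
  rw [unspikedWigner, wignerNoise_eq_map, Measure.map_map (by fun_prop) measurable_symmOfUpper,
    hscale, ← Measure.map_map measurable_symmOfUpper (by fun_prop),
    pi_map_const_mul_eq_pi_upperEntryLaw]

theorem spikedWigner_eq_map (lam : ℝ) (μ : Measure (EuclideanSpace ℝ (Fin n))) [SFinite μ] :
    spikedWigner lam P Pd μ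
      = ((μ.prod (Measure.pi (upperEntryLaw P Pd n))).map
          (fun q => spikeUpper lam q.1 + q.2)).map symmOfUpper := by
  have hshift : (fun (q : EuclideanSpace ℝ (Fin n) × (Fin n → Fin n → ℝ)) i j =>
        lam * (q.1 i * q.1 j) + (Real.sqrt n)⁻¹ * q.2 i j) ∘ Prod.map id symmOfUpper
      = symmOfUpper ∘ (fun q => spikeUpper lam q.1 + q.2)
          ∘ Prod.map id fun h (u : UpperIdx n) => (Real.sqrt n)⁻¹ * h u := by
    ext q i j
    simp only [Function.comp, Prod.map, symmOfUpper, spikeUpper, upperIdx, id, Pi.add_apply]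
    split_ifs <;> ring
  have hscale : Measurable fun (h : UpperIdx n → ℝ) u => (Real.sqrt n)⁻¹ * h u := by fun_prop
  have hadd : Measurable fun q : EuclideanSpace ℝ (Fin n) × (UpperIdx n → ℝ) =>
      spikeUpper lam q.1 + q.2 := by
    have := measurable_spikeUpper (n := n) lam
    fun_prop
  have hF : Measurable fun (q : EuclideanSpace ℝ (Fin n) × (Fin n → Fin n → ℝ)) i j =>
      lam * (q.1 i * q.1 j) + (Real.sqrt n)⁻¹ * q.2 i j := by fun_prop
  rw [spikedWigner, wignerNoise_eq_map, Measure.prod_map_right _ _ measurable_symmOfUpper,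
    Measure.map_map hF (measurable_id.prodMap measurable_symmOfUpper), hshift,
    ← Measure.map_map measurable_symmOfUpper (hadd.comp (measurable_id.prodMap hscale)),
    ← Measure.map_map hadd (measurable_id.prodMap hscale), ← Measure.prod_map_right _ _ hscale,
    pi_map_const_mul_eq_pi_upperEntryLaw]

end WignerModels

section GaussianWigner

variable {n : ℕ}

def noiseVar (n : ℕ) (u : UpperIdx n) : ℝ≥0 := (if u.1.1 = u.1.2 then 2 else 1) / n

theorem noiseVar_ne_zero (u : UpperIdx n) : noiseVar n u ≠ 0 := by
  have : n ≠ 0 := u.1.1.pos.ne'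
  unfold noiseVar
  split <;> simp [this]

theorem upperEntryLaw_gaussianReal (u : UpperIdx n) :
    upperEntryLaw (gaussianReal 0 1) (gaussianReal 0 2) n u = gaussianReal 0 (noiseVar n u) := by
  rw [upperEntryLaw, noiseVar]
  split <;>
  · rw [gaussianReal_map_const_mul, mul_zero]
    congr 1
    ext
    simp [inv_pow, div_eq_inv_mul]

theorem pi_upperEntryLaw_gaussianReal :
    Measure.pi (upperEntryLaw (gaussianReal 0 1) (gaussianReal 0 2) n) = gaussianPi (noiseVar n) :=
  congrArg Measure.pi (funext upperEntryLaw_gaussianReal)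

theorem GWig0_eq_map : GWig0 n = (gaussianPi (noiseVar n)).map symmOfUpper := by
  rw [GWig0, unspikedWigner_eq_map, pi_upperEntryLaw_gaussianReal]

theorem GWig_eq_map (lam : ℝ) (μ : Measure (EuclideanSpace ℝ (Fin n))) [SFinite μ] :
    GWig lam μ = ((μ.prod (gaussianPi (noiseVar n))).map
      (fun q => spikeUpper lam q.1 + q.2)).map symmOfUpper := by
  rw [GWig, spikedWigner_eq_map, pi_upperEntryLaw_gaussianReal]

theorem sum_spikeUpper_mul_div_noiseVar (lam : ℝ) (x x' : EuclideanSpace ℝ (Fin n)) :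
    ∑ u, spikeUpper lam x u * spikeUpper lam x' u / noiseVar n u
      = n * lam ^ 2 / 2 * inner ℝ x x' ^ 2 := by
  have hterm (u : UpperIdx n) : spikeUpper lam x u * spikeUpper lam x' u / noiseVar n u
      = n * lam ^ 2 / 2 * ((if u.1.1 = u.1.2 then 1 else 2)
          * ((x u.1.1 * x' u.1.1) * (x u.1.2 * x' u.1.2))) := by
    have : (n : ℝ) ≠ 0 := mod_cast u.1.1.pos.ne'
    simp only [spikeUpper, noiseVar]
    split_ifs <;> push_cast <;> field_simp
  rw [Finset.sum_congr rfl fun u _ => hterm u, ← Finset.mul_sum,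
    ← sum_eq_sum_upper_of_symm (f := fun p => (x p.1 * x' p.1) * (x p.2 * x' p.2))
      fun i j => mul_comm _ _, Fintype.sum_prod_type]
  simp only [← Finset.sum_mul_sum, ← sq, PiLp.inner_apply, RCLike.inner_apply, conj_trivial,
    mul_comm (x _)]

end GaussianWigner

theorem gwig_second_moment_general (lam : ℝ) (X : SpikePrior) (n : ℕ) :
    ∫⁻ Y, ((GWig lam (X.μ n)).rnDeriv (GWig0 n) Y) ^ 2 ∂(GWig0 n)
      = wignerSecondMoment X.μ lam n := by
  have := X.isProb n
  have hspike := measurable_spikeUpper (n := n) lam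
  rw [GWig_eq_map, GWig0_eq_map, map_const_add_prod_gaussianPi _ noiseVar_ne_zero hspike,
    lintegral_rnDeriv_map_of_leftInverse (Φ := (· ^ 2)) _ measurable_symmOfUpper
      measurable_upperOfMatrix upperOfMatrix_symmOfUpper
      (Measurable.lintegral_prod_left (by fun_prop)) (by fun_prop),
    lintegral_sq_lintegral_gaussianPiLR _ hspike, wignerSecondMoment]
  simp_rw [sum_spikeUpper_mul_div_noiseVar]

/-- **Proposition 3.4.** For the spiked Gaussian Wigner model `Q_n = GWig(λ, X)` and the
unspiked model `P_n = GWig(0)`, the second moment equals `E_{x,x'} exp((nλ²/2)⟨x,x'⟩²)`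
(as an identity in `[0,∞]`). -/
theorem gwig_second_moment (lam : ℝ) (hlam : 0 ≤ lam) (X : SpikePrior) (n : ℕ) :
    ∫⁻ Y, ((GWig lam (X.μ n)).rnDeriv (GWig0 n) Y) ^ 2 ∂(GWig0 n)
      = wignerSecondMoment X.μ lam n :=
  gwig_second_moment_general lam X n
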